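/- Let Σ = {a,b,c} with a,b of rank 0 and c of rank 2, and let T be the set of trees over Σ such that the path from the root to each a-labelled leaf contains an even number of branching nodes, where an internal node is branching if both its left and its right subtree contain an a-labelled leaf. Then T is definable in first-order logic with unary deterministic transitive closure (FO+DTC^1), and T is accepted by a deterministic single-head tree-walking automaton with one nested pebble. -/

import Mathlib

/-!
An `a`-leaf is never branching, so its number of branching ancestors is even iff iterating
"go to the second-nearest branching proper ancestor" from it reaches a node without branching
proper ancestors. That step is first-order definable and functional, which gives an
`FO+DTC^1` definition.

The automaton traverses the tree depth first, keeping in its state the parity of the number of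
branching ancestors of the head, and rejects at an `a`-leaf of odd parity. To decide whether
a node is branching (on entering it, and again on leaving it to restore the parity), it drops
the pebble there and searches first its left and then its right subtree for an `a`: the pebble
tells each search where the subtree ends.
-/

namespace NestedPebbles

/-- Trees over a ranked alphabet `(Sig, rank)`: terms `σ(t₁,…,tₙ)` with `rank σ = n`. -/
inductive RTree (Sig : Type) (rank : Sig → ℕ) : Type
  | node (a : Sig) (children : Fin (rank a) → RTree Sig rank) : RTree Sig rank

namespace RTree

variable {Sig : Type} {rank : Sig → ℕ}

/-- The label of the root symbol. -/
def label : RTree Sig rank → Sig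
  | node a _ => a

/-- The `i`-th (0-based) immediate subtree, if it exists. -/
def child : RTree Sig rank → ℕ → Option (RTree Sig rank)
  | node a c, i => if h : i < rank a then some (c ⟨i, h⟩) else none

/-- The subtree at a position (a list of 0-based child indices, read from the root). -/
def subtree : RTree Sig rank → List ℕ → Option (RTree Sig rank)
  | t, [] => some t
  | t, i :: p => (t.child i).bind fun s => s.subtree p

end RTree

variable {Sig : Type} {rank : Sig → ℕ}

/-- `p` is (the address of) a node of `t`. -/
def IsPos (t : RTree Sig rank) (p : List ℕ) : Prop := (t.subtree p).isSome = true

/-- The type of nodes of a tree `t`, as valid positions. -/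
def Pos (t : RTree Sig rank) : Type := { p : List ℕ // IsPos t p }

/-- The root node. -/
def rootPos (t : RTree Sig rank) : Pos t := ⟨[], rfl⟩

/-- The label of the node of `t` at position `p`. -/
def labelAt (t : RTree Sig rank) (p : List ℕ) : Option Sig := (t.subtree p).map RTree.label

/-- The child number of a node: `0` for the root, and `j` for a `j`-th child (1-based). -/
def childNo (p : List ℕ) : ℕ :=
  match p.getLast? with
  | none => 0
  | some j => j + 1

/-!  ### First-order logic with k-ary transitive closure, on trees  -/

/-- First-order formulas over a ranked alphabet, with a `k`-ary transitive closure
operator.  Variables are natural numbers.  `lab a x` means `x` has label `a`;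
`edg i x y` means `y` is the `i`-th child of `x` (`i` is 1-based);
`le x y` means `x` is an ancestor of `y`; `tc xs ys φ us vs` is the transitive
closure `φ*` of `φ` with respect to the tuples of variables `xs`, `ys` (which it
binds), applied to the tuples of variables `us`, `vs`. -/
inductive TForm (Sig : Type) (rank : Sig → ℕ) (k : ℕ) : Type
  | lab (a : Sig) (x : ℕ)
  | edg (i : ℕ) (x y : ℕ)
  | le (x y : ℕ)
  | eq (x y : ℕ)
  | not (φ : TForm Sig rank k)
  | and (φ ψ : TForm Sig rank k)
  | or (φ ψ : TForm Sig rank k)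
  | ex (x : ℕ) (φ : TForm Sig rank k)
  | all (x : ℕ) (φ : TForm Sig rank k)
  | tc (xs ys : Fin k → ℕ) (φ : TForm Sig rank k) (us vs : Fin k → ℕ)

/-- Update a valuation on a tuple of variables simultaneously. -/
noncomputable def updVec {α : Type} {k : ℕ} (ν : ℕ → α) (xs : Fin k → ℕ) (a : Fin k → α) :
    ℕ → α :=
  fun n => if h : ∃ i, xs i = n then a h.choose else ν n

/-- Satisfaction of a formula in a tree `t` under a valuation of the variables by
nodes of `t`. -/
def Sat {k : ℕ} (t : RTree Sig rank) : TForm Sig rank k → (ℕ → Pos t) → Prop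
  | .lab a x, ν => labelAt t (ν x).1 = some a
  | .edg i x y, ν => 1 ≤ i ∧ (ν y).1 = (ν x).1 ++ [i - 1]
  | .le x y, ν => (ν x).1 <+: (ν y).1
  | .eq x y, ν => ν x = ν y
  | .not φ, ν => ¬ Sat t φ ν
  | .and φ ψ, ν => Sat t φ ν ∧ Sat t ψ ν
  | .or φ ψ, ν => Sat t φ ν ∨ Sat t ψ ν
  | .ex x φ, ν => ∃ u : Pos t, Sat t φ (Function.update ν x u)
  | .all x φ, ν => ∀ u : Pos t, Sat t φ (Function.update ν x u)
  | .tc xs ys φ us vs, ν =>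
      Relation.ReflTransGen
        (fun a b : Fin k → Pos t => Sat t φ (updVec (updVec ν xs a) ys b))
        (fun i => ν (us i)) (fun i => ν (vs i))

/-- The free variables of a formula. -/
def freeVars {k : ℕ} : TForm Sig rank k → Set ℕ
  | .lab _ x => {x}
  | .edg _ x y => {x, y}
  | .le x y => {x, y}
  | .eq x y => {x, y}
  | .not φ => freeVars φ
  | .and φ ψ => freeVars φ ∪ freeVars ψ
  | .or φ ψ => freeVars φ ∪ freeVars ψ
  | .ex x φ => freeVars φ \ {x}
  | .all x φ => freeVars φ \ {x}
  | .tc xs ys φ us vs =>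
      (freeVars φ \ (Set.range xs ∪ Set.range ys)) ∪ Set.range us ∪ Set.range vs

/-- Two `k`-tuples of variables consist of `2k` pairwise distinct variables. -/
def Distinct2 {k : ℕ} (xs ys : Fin k → ℕ) : Prop :=
  Function.Injective xs ∧ Function.Injective ys ∧ ∀ i j, xs i ≠ ys j

/-- `φ` is functional in the tuples of variables `xs`, `ys`: for every tree, every
valuation of the remaining variables, and every value of `xs`, there is at most one
value of `ys` satisfying `φ`. -/
def FunctionalIn {k : ℕ} (φ : TForm Sig rank k) (xs ys : Fin k → ℕ) : Prop :=
  ∀ (t : RTree Sig rank) (ν : ℕ → Pos t) (a b b' : Fin k → Pos t),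
    Sat t φ (updVec (updVec ν xs a) ys b) →
    Sat t φ (updVec (updVec ν xs a) ys b') → b = b'

/-- Well-formedness: in each transitive closure the `2k` bound variables are
pairwise distinct and occur free in the body. -/
def WF {k : ℕ} : TForm Sig rank k → Prop
  | .not φ => WF φ
  | .and φ ψ => WF φ ∧ WF ψ
  | .or φ ψ => WF φ ∧ WF ψ
  | .ex _ φ => WF φ
  | .all _ φ => WF φ
  | .tc xs ys φ _ _ =>
      Distinct2 xs ys ∧ (Set.range xs ∪ Set.range ys) ⊆ freeVars φ ∧ WF φ
  | _ => True

/-- All transitive closures occurring in the formula are deterministic, i.e., applied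
to functional formulas. -/
def DetTC {k : ℕ} : TForm Sig rank k → Prop
  | .not φ => DetTC φ
  | .and φ ψ => DetTC φ ∧ DetTC ψ
  | .or φ ψ => DetTC φ ∧ DetTC ψ
  | .ex _ φ => DetTC φ
  | .all _ φ => DetTC φ
  | .tc xs ys φ _ _ => FunctionalIn φ xs ys ∧ DetTC φ
  | _ => True

/-- All occurrences of transitive closure are positive (within the scope of an even
number of negations); the polarity parameter `b` is `true` for an even number. -/
def PosTC {k : ℕ} : Bool → TForm Sig rank k → Prop
  | b, .not φ => PosTC (!b) φ
  | b, .and φ ψ => PosTC b φ ∧ PosTC b ψ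
  | b, .or φ ψ => PosTC b φ ∧ PosTC b ψ
  | b, .ex _ φ => PosTC b φ
  | b, .all _ φ => PosTC b φ
  | b, .tc _ _ φ _ _ => b = true ∧ PosTC b φ
  | _, _ => True

/-- The formula contains no transitive closure operator (pure first-order). -/
def TCFree {k : ℕ} : TForm Sig rank k → Prop
  | .not φ => TCFree φ
  | .and φ ψ => TCFree φ ∧ TCFree ψ
  | .or φ ψ => TCFree φ ∧ TCFree ψ
  | .ex _ φ => TCFree φ
  | .all _ φ => TCFree φ
  | .tc _ _ _ _ _ => False
  | _ => True

/-- The tree language defined by a (closed) formula. -/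
def treesOf {k : ℕ} (φ : TForm Sig rank k) : Set (RTree Sig rank) :=
  {t | Sat t φ fun _ => rootPos t}

/-- `FO+DTC^k`: tree languages definable by closed first-order formulas with `k`-ary
deterministic transitive closure. -/
def FODTC (Sig : Type) (rank : Sig → ℕ) (k : ℕ) : Set (Set (RTree Sig rank)) :=
  {L | ∃ φ : TForm Sig rank k, WF φ ∧ DetTC φ ∧ freeVars φ = ∅ ∧ L = treesOf φ}

/-- `FO+TC^k`: tree languages definable by closed first-order formulas with `k`-ary
transitive closure. -/
def FOTC (Sig : Type) (rank : Sig → ℕ) (k : ℕ) : Set (Set (RTree Sig rank)) :=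
  {L | ∃ φ : TForm Sig rank k, WF φ ∧ freeVars φ = ∅ ∧ L = treesOf φ}

/-- `FO+posTC^k`: tree languages definable by closed first-order formulas in which
every occurrence of the `k`-ary transitive closure operator is positive. -/
def FOposTC (Sig : Type) (rank : Sig → ℕ) (k : ℕ) : Set (Set (RTree Sig rank)) :=
  {L | ∃ φ : TForm Sig rank k, WF φ ∧ PosTC true φ ∧ freeVars φ = ∅ ∧ L = treesOf φ}

/-!  ### k-head tree-walking automata with nested pebbles  -/

/-- Tests of a `k`-head tree-walking automaton with pebble set `X`:
label of the node under head `i`, presence of pebble `x` at head `i`, and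
child number of the node under head `i`. -/
inductive TTest (Sig : Type) (k : ℕ) (X : Type) : Type
  | lab (i : Fin k) (a : Sig)
  | peb (i : Fin k) (x : X)
  | chno (i : Fin k) (j : ℕ)

/-- Instructions: move head `i` up / down to the `j`-th child (1-based), drop a
pebble at head `i`, retrieve the most recently dropped pebble (from a distance),
or perform a positive (`b = true`) or negated (`b = false`) test. -/
inductive TInstr (Sig : Type) (k : ℕ) (X : Type) : Type
  | up (i : Fin k)
  | down (i : Fin k) (j : ℕ)
  | dropPeb (i : Fin k) (x : X)
  | retrieve (x : X)
  | test (b : Bool) (τ : TTest Sig k X)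

/-- A `k`-head tree-walking automaton with nested pebbles: a finite state set `Q`,
a finite pebble set `X`, an initial state, accepting states, and a finite set of
instructions `⟨p, χ, q⟩`. -/
structure TWA (Sig : Type) (rank : Sig → ℕ) (k : ℕ) : Type 1 where
  Q : Type
  finQ : Fintype Q
  X : Type
  finX : Fintype X
  q0 : Q
  acc : Set Q
  instr : Set (Q × TInstr Sig k X × Q)
  instrFin : instr.Finite

/-- Configurations: a state, the positions of the `k` heads, and the stack of
dropped pebbles with their positions (most recent first). -/
abbrev TConf {Sig : Type} {rank : Sig → ℕ} {k : ℕ} (A : TWA Sig rank k)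
    (t : RTree Sig rank) : Type :=
  A.Q × (Fin k → Pos t) × List (A.X × Pos t)

/-- Semantics of tests. -/
def testHolds {k : ℕ} (t : RTree Sig rank) {X : Type} (τ : TTest Sig k X)
    (hs : Fin k → Pos t) (π : List (X × Pos t)) : Prop :=
  match τ with
  | .lab i a => labelAt t (hs i).1 = some a
  | .peb i x => (x, hs i) ∈ π
  | .chno i j => childNo (hs i).1 = j

/-- Semantics of a single instruction, relating head positions and pebble stacks
before and after. -/
def instrStep {k : ℕ} (t : RTree Sig rank) {X : Type} (ins : TInstr Sig k X)
    (hs : Fin k → Pos t) (π : List (X × Pos t))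
    (hs' : Fin k → Pos t) (π' : List (X × Pos t)) : Prop :=
  match ins with
  | .up i => π' = π ∧ (∃ j : ℕ, (hs i).1 = (hs' i).1 ++ [j]) ∧ ∀ h, h ≠ i → hs' h = hs h
  | .down i j => π' = π ∧ 1 ≤ j ∧ (hs' i).1 = (hs i).1 ++ [j - 1] ∧ ∀ h, h ≠ i → hs' h = hs h
  | .dropPeb i x => hs' = hs ∧ π' = (x, hs i) :: π ∧ ∀ w, (x, w) ∉ π
  | .retrieve x => hs' = hs ∧ ∃ w, π = (x, w) :: π'
  | .test b τ => hs' = hs ∧ π' = π ∧ (testHolds t τ hs π ↔ b = true)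

/-- The step relation of automaton `A` on tree `t`. -/
def Step {k : ℕ} (A : TWA Sig rank k) (t : RTree Sig rank) :
    TConf A t → TConf A t → Prop :=
  fun c c' => ∃ ins : TInstr Sig k A.X,
    (c.1, ins, c'.1) ∈ A.instr ∧ instrStep t ins c.2.1 c.2.2 c'.2.1 c'.2.2

/-- `χ'` is the negation of the test `χ`. -/
def negOf {k : ℕ} {X : Type} (χ χ' : TInstr Sig k X) : Prop :=
  ∃ b τ, χ = TInstr.test b τ ∧ χ' = TInstr.test (!b) τ

/-- Determinism: any two distinct instructions with the same source state consist
of a test and its negation. -/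
def Deterministic {k : ℕ} (A : TWA Sig rank k) : Prop :=
  ∀ p χ₁ q₁ χ₂ q₂, (p, χ₁, q₁) ∈ A.instr → (p, χ₂, q₂) ∈ A.instr →
    (χ₁, q₁) ≠ (χ₂, q₂) → negOf χ₁ χ₂ ∨ negOf χ₂ χ₁

/-- The initial configuration: initial state, all heads at the root, no pebbles. -/
def initConf {k : ℕ} (A : TWA Sig rank k) (t : RTree Sig rank) : TConf A t :=
  (A.q0, fun _ => rootPos t, [])

/-- A configuration is halting if no step is possible from it. -/
def HaltingConf {k : ℕ} (A : TWA Sig rank k) (t : RTree Sig rank) (c : TConf A t) : Prop :=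
  ∀ c', ¬ Step A t c c'

/-- Acceptance: some computation from the initial configuration halts in an
accepting state with all heads at the root and no pebbles on the tree. -/
def Accepts {k : ℕ} (A : TWA Sig rank k) (t : RTree Sig rank) : Prop :=
  ∃ q ∈ A.acc,
    Relation.ReflTransGen (Step A t) (initConf A t) (q, fun _ => rootPos t, []) ∧
    HaltingConf A t (q, fun _ => rootPos t, [])

/-- The tree language accepted by `A`. -/
def Lang {k : ℕ} (A : TWA Sig rank k) : Set (RTree Sig rank) := {t | Accepts A t}

/-- The automaton uses no pebbles at all. -/
def PebbleFree {k : ℕ} (A : TWA Sig rank k) : Prop :=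
  ∀ p χ q, (p, χ, q) ∈ A.instr →
    (∀ i x, χ ≠ TInstr.dropPeb i x) ∧ (∀ x, χ ≠ TInstr.retrieve x) ∧
    (∀ b i x, χ ≠ TInstr.test b (TTest.peb i x))

/-- `DPTWA^k`: tree languages accepted by deterministic `k`-head tree-walking
automata with nested pebbles. -/
def DPTWA (Sig : Type) (rank : Sig → ℕ) (k : ℕ) : Set (Set (RTree Sig rank)) :=
  {L | ∃ A : TWA Sig rank k, Deterministic A ∧ L = Lang A}

/-- `NPTWA^k`: tree languages accepted by nondeterministic `k`-head tree-walking
automata with nested pebbles. -/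
def NPTWA (Sig : Type) (rank : Sig → ℕ) (k : ℕ) : Set (Set (RTree Sig rank)) :=
  {L | ∃ A : TWA Sig rank k, L = Lang A}

/-- `NTWA^k`: tree languages accepted by nondeterministic `k`-head tree-walking
automata without pebbles. -/
def NTWA (Sig : Type) (rank : Sig → ℕ) (k : ℕ) : Set (Set (RTree Sig rank)) :=
  {L | ∃ A : TWA Sig rank k, PebbleFree A ∧ L = Lang A}

end NestedPebbles

namespace NestedPebbles

/-- The alphabet `{a, b, c}`. -/
inductive ABC : Type
  | a | b | c
deriving DecidableEq

/-- `a` and `b` are nullary, `c` is binary. -/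
def rankABC : ABC → ℕ
  | .a => 0
  | .b => 0
  | .c => 2

instance : Fintype ABC :=
  ⟨⟨{ABC.a, ABC.b, ABC.c}, by decide⟩, fun x => by cases x <;> decide⟩

/-- The tree contains an `a`-labelled (leaf) node. -/
def hasA : RTree ABC rankABC → Prop
  | .node x ch => x = ABC.a ∨ ∃ i, hasA (ch i)

/-- The node of `t` at position `p` is branching: both its left and its right
subtree contain an `a`-labelled leaf. -/
def Branching (t : RTree ABC rankABC) (p : List ℕ) : Prop :=
  (∃ s, t.subtree (p ++ [0]) = some s ∧ hasA s) ∧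
  (∃ s, t.subtree (p ++ [1]) = some s ∧ hasA s)

/-- The language `T`: trees over `{a,b,c}` such that the path from the root to
each `a`-labelled leaf contains an even number of branching nodes. -/
def Tlang : Set (RTree ABC rankABC) :=
  {t | ∀ p : List ℕ, labelAt t p = some ABC.a →
        Even (Nat.card { q : List ℕ // q <+: p ∧ Branching t q })}

section Trees

variable {Sig : Type} {rank : Sig → ℕ}

namespace RTree

theorem subtree_node_cons (a : Sig) (ch : Fin (rank a) → RTree Sig rank) (i : ℕ) (p : List ℕ) :
    (node a ch).subtree (i :: p) = if h : i < rank a then (ch ⟨i, h⟩).subtree p else none := by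
  simp only [subtree, child]
  split <;> rfl

theorem subtree_append (t : RTree Sig rank) (p q : List ℕ) :
    t.subtree (p ++ q) = (t.subtree p).bind (·.subtree q) := by
  induction p generalizing t with
  | nil => rfl
  | cons i p ih =>
    simp only [List.cons_append, subtree]
    cases t.child i <;> simp [ih]

theorem subtree_append_singleton {t : RTree Sig rank} {p : List ℕ} {a : Sig}
    {ch : Fin (rank a) → RTree Sig rank} (h : t.subtree p = some (node a ch)) (i : Fin (rank a)) :
    t.subtree (p ++ [(i : ℕ)]) = some (ch i) := by
  rw [subtree_append, h, Option.bind_some, subtree_node_cons, dif_pos i.2]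
  rfl

end RTree

open RTree

theorem IsPos.of_prefix {t : RTree Sig rank} {p q : List ℕ} (hq : q <+: p) (hp : IsPos t p) :
    IsPos t q := by
  obtain ⟨r, rfl⟩ := hq
  unfold IsPos at *
  rw [subtree_append] at hp
  cases h : t.subtree q <;> simp_all

theorem IsPos.of_labelAt_eq_some {t : RTree Sig rank} {p : List ℕ} {a : Sig}
    (h : labelAt t p = some a) : IsPos t p := by
  unfold IsPos
  unfold labelAt at h
  cases hs : t.subtree p <;> simp_all

theorem labelAt_eq_of_subtree_eq {t : RTree Sig rank} {p : List ℕ} {a : Sig}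
    {ch : Fin (rank a) → RTree Sig rank} (h : t.subtree p = some (node a ch)) :
    labelAt t p = some a := by
  rw [labelAt, h]
  rfl

theorem labelAt_node_cons (a : Sig) (ch : Fin (rank a) → RTree Sig rank) (i : ℕ) (q : List ℕ) :
    labelAt (node a ch) (i :: q) = if h : i < rank a then labelAt (ch ⟨i, h⟩) q else none := by
  rw [labelAt, subtree_node_cons]
  split <;> rfl

theorem childNo_append_singleton (p : List ℕ) (j : ℕ) : childNo (p ++ [j]) = j + 1 := by
  rw [childNo, List.getLast?_concat]

def Pos.child {t : RTree Sig rank} (p : Pos t) {a : Sig} {ch : Fin (rank a) → RTree Sig rank}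
    (hs : t.subtree p.1 = some (node a ch)) (i : Fin (rank a)) : Pos t :=
  ⟨p.1 ++ [(i : ℕ)], by rw [IsPos, subtree_append_singleton hs]; rfl⟩

theorem Pos.subtree_child {t : RTree Sig rank} (p : Pos t) {a : Sig}
    {ch : Fin (rank a) → RTree Sig rank} (hs : t.subtree p.1 = some (node a ch))
    (i : Fin (rank a)) : t.subtree (p.child hs i).1 = some (ch i) :=
  subtree_append_singleton hs i

theorem Pos.child_ne_of_prefix {t : RTree Sig rank} {q v : Pos t} {a : Sig}
    {ch : Fin (rank a) → RTree Sig rank} (hq : t.subtree q.1 = some (node a ch))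
    (i : Fin (rank a)) (hv : v.1 <+: q.1) : q.child hq i ≠ v := by
  intro h
  have := congrArg (fun p : Pos t => p.1.length) h
  simp only [Pos.child, List.length_append, List.length_singleton] at this
  have := hv.length_le
  omega

end Trees

section General

open Relation

theorem nodup_inits {α : Type*} (l : List α) : l.inits.Nodup := by
  induction l with
  | nil => simp
  | cons a l ih =>
    rw [List.inits_cons]
    exact List.nodup_cons.2 ⟨by simp, ih.map List.cons_injective⟩

theorem reflTransGen_fun_unique_iff {ι α : Type*} [Unique ι] {R : (ι → α) → (ι → α) → Prop}
    {S : α → α → Prop} (h : ∀ a b, R a b ↔ S (a default) (b default)) {f g : ι → α} :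
    ReflTransGen R f g ↔ ReflTransGen S (f default) (g default) := by
  refine ⟨ReflTransGen.lift (· default) (fun a b => (h a b).1) _ _, fun hfg => ?_⟩
  have hconst : ∀ f : ι → α, (fun _ => f default) = f :=
    fun f => funext fun i => by rw [Unique.eq_default i]
  simpa only [Function.onFun, hconst] using ReflTransGen.lift (fun x (_ : ι) => x)
    (fun x y hxy => (h (fun _ => x) (fun _ => y)).2 hxy) _ _ hfg

theorem reflTransGen_subtype_iff {α : Type*} {P : α → Prop} {r : α → α → Prop}
    (hr : ∀ a b, r a b → P b) {a b : Subtype P} :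
    ReflTransGen (fun x y : Subtype P => r x y) a b ↔ ReflTransGen r a b := by
  refine ⟨ReflTransGen.lift Subtype.val (fun _ _ => id) _ _, fun h => ?_⟩
  obtain ⟨a, ha⟩ := a
  change ReflTransGen r a b at h
  induction h using ReflTransGen.head_induction_on with
  | refl => exact .refl
  | head hstep _ ih => exact .head hstep (ih (hr _ _ hstep))

theorem updVec_singleton_self {α : Type} (ν : ℕ → α) (m : ℕ) (a : Fin 1 → α) :
    updVec ν ![m] a m = a 0 := by
  rw [updVec, dif_pos ⟨0, rfl⟩]
  exact congrArg a (Subsingleton.elim _ _)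

theorem updVec_singleton_of_ne {α : Type} (ν : ℕ → α) {m n : ℕ} (h : n ≠ m) (a : Fin 1 → α) :
    updVec ν ![m] a n = ν n := by
  rw [updVec, dif_neg]
  rintro ⟨i, hi⟩
  exact h (by rw [← hi, Matrix.cons_val_fin_one])

theorem eq_of_reflTransGen_of_normal {α : Type*} {r : α → α → Prop} (hr : Relator.RightUnique r)
    {a b c : α} (hab : ReflTransGen r a b) (hac : ReflTransGen r a c) (hb : ∀ d, ¬ r b d)
    (hc : ∀ d, ¬ r c d) : b = c := by
  rcases hab.total_of_right_unique hr hac with h | h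
  · exact ((reflTransGen_iff_eq hb).1 h).symm
  · exact (reflTransGen_iff_eq hc).1 h

end General

section Alphabet

open RTree

def leftIdx : Fin (rankABC ABC.c) := ⟨0, by decide⟩

def rightIdx : Fin (rankABC ABC.c) := ⟨1, by decide⟩

theorem forall_fin_rankABC_c {P : Fin (rankABC ABC.c) → Prop} :
    (∀ i, P i) ↔ P leftIdx ∧ P rightIdx :=
  Fin.forall_fin_two

theorem hasA_iff_exists_labelAt (s : RTree ABC rankABC) :
    hasA s ↔ ∃ p, labelAt s p = some ABC.a := by
  induction s with
  | node x ch ih =>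
    constructor
    · rintro (rfl | ⟨i, hi⟩)
      · exact ⟨[], rfl⟩
      · obtain ⟨p, hp⟩ := (ih i).mp hi
        exact ⟨i :: p, by rw [labelAt_node_cons, dif_pos i.2]; exact hp⟩
    · rintro ⟨_ | ⟨i, p⟩, hp⟩
      · exact Or.inl (Option.some.inj hp)
      · rw [labelAt_node_cons] at hp
        split at hp
        · exact Or.inr ⟨_, (ih _).mpr ⟨p, hp⟩⟩
        · exact absurd hp nofun

theorem Branching.isPos {t : RTree ABC rankABC} {p : List ℕ} (h : Branching t p) : IsPos t p := by
  obtain ⟨⟨s, hs, -⟩, -⟩ := h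
  exact IsPos.of_prefix ⟨[0], rfl⟩ (by rw [IsPos, hs]; rfl)

theorem branching_node_cons {x : ABC} (ch : Fin (rankABC x) → RTree ABC rankABC)
    (i : Fin (rankABC x)) (w : List ℕ) :
    Branching (node x ch) (i :: w) ↔ Branching (ch i) w := by
  simp only [Branching, List.cons_append, subtree_node_cons, dif_pos i.2]

theorem branching_node_c_nil (ch : Fin (rankABC ABC.c) → RTree ABC rankABC) :
    Branching (node ABC.c ch) [] ↔ hasA (ch leftIdx) ∧ hasA (ch rightIdx) := by
  simp [Branching, subtree_node_cons, subtree, rankABC, leftIdx, rightIdx]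

theorem not_branching_leaf {x : ABC} (hx : rankABC x = 0)
    (ch : Fin (rankABC x) → RTree ABC rankABC) : ¬ Branching (node x ch) [] := by
  rintro ⟨⟨s, hs, -⟩, -⟩
  simp [subtree_node_cons, hx] at hs

theorem not_branching_of_labelAt_eq_a {t : RTree ABC rankABC} {p : List ℕ}
    (h : labelAt t p = some ABC.a) : ¬ Branching t p := by
  rintro ⟨⟨s, hs, -⟩, -⟩
  obtain ⟨⟨x, ch⟩, hp, hx⟩ := Option.map_eq_some_iff.mp h
  cases hx
  simp [subtree_append, hp, subtree_node_cons, rankABC] at hs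

theorem hasA_node_c (ch : Fin (rankABC ABC.c) → RTree ABC rankABC) :
    hasA (node ABC.c ch) ↔ hasA (ch leftIdx) ∨ hasA (ch rightIdx) := by
  simp only [hasA, reduceCtorEq, false_or]
  exact Fin.exists_fin_two

end Alphabet

section Chains

open RTree

def branchingAbove (t : RTree ABC rankABC) (x : List ℕ) : Set (List ℕ) :=
  {q | q <+: x ∧ q ≠ x ∧ Branching t q}

theorem branchingAbove_finite (t : RTree ABC rankABC) (x : List ℕ) :
    (branchingAbove t x).Finite :=
  (List.finite_toSet x.inits).subset fun q hq => (List.mem_inits q x).2 hq.1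

theorem card_branching_prefixes_of_labelAt_eq_a {t : RTree ABC rankABC} {p : List ℕ}
    (h : labelAt t p = some ABC.a) :
    Nat.card {q : List ℕ // q <+: p ∧ Branching t q} = (branchingAbove t p).ncard := by
  have hset : {q | q <+: p ∧ Branching t q} = branchingAbove t p := by
    ext q
    exact ⟨fun ⟨hq, hbr⟩ => ⟨hq, fun e => not_branching_of_labelAt_eq_a h (e ▸ hbr), hbr⟩,
      fun ⟨hq, _, hbr⟩ => ⟨hq, hbr⟩⟩
  rw [← hset, ← Nat.card_coe_set_eq]
  rfl

def IsNearestBranchingAbove (t : RTree ABC rankABC) (x z : List ℕ) : Prop :=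
  z ∈ branchingAbove t x ∧ ∀ w ∈ branchingAbove t x, z <+: w → w = z

theorem IsNearestBranchingAbove.unique {t : RTree ABC rankABC} {x z z' : List ℕ}
    (h : IsNearestBranchingAbove t x z) (h' : IsNearestBranchingAbove t x z') : z = z' := by
  rcases List.prefix_or_prefix_of_prefix h.1.1 h'.1.1 with hp | hp
  · exact (h.2 z' h'.1 hp).symm
  · exact h'.2 z h.1 hp

theorem exists_isNearestBranchingAbove {t : RTree ABC rankABC} {x : List ℕ}
    (h : (branchingAbove t x).Nonempty) : ∃ z, IsNearestBranchingAbove t x z := by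
  obtain ⟨z, hz, hmax⟩ := (branchingAbove_finite t x).exists_maximalFor List.length _ h
  exact ⟨z, hz, fun w hw hzw =>
    (hzw.eq_of_length (hzw.length_le.antisymm (hmax hw hzw.length_le))).symm⟩

theorem IsNearestBranchingAbove.branchingAbove_eq {t : RTree ABC rankABC} {x z : List ℕ}
    (h : IsNearestBranchingAbove t x z) :
    branchingAbove t x = insert z (branchingAbove t z) := by
  obtain ⟨⟨hzx, hzne, hzbr⟩, hmax⟩ := h
  ext q
  simp only [branchingAbove, Set.mem_insert_iff, Set.mem_ofPred_eq]
  constructor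
  · rintro ⟨hqx, hqne, hqbr⟩
    refine or_iff_not_imp_left.2 fun hqz => ⟨?_, hqz, hqbr⟩
    rcases List.prefix_or_prefix_of_prefix hqx hzx with hp | hp
    · exact hp
    · exact absurd (hmax q ⟨hqx, hqne, hqbr⟩ hp) hqz
  · rintro (rfl | ⟨hqz, hqne, hqbr⟩)
    · exact ⟨hzx, hzne, hzbr⟩
    · refine ⟨hqz.trans hzx, ?_, hqbr⟩
      rintro rfl
      exact hzne (hzx.eq_of_length (hzx.length_le.antisymm hqz.length_le))

theorem IsNearestBranchingAbove.ncard_eq {t : RTree ABC rankABC} {x z : List ℕ}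
    (h : IsNearestBranchingAbove t x z) :
    (branchingAbove t x).ncard = (branchingAbove t z).ncard + 1 := by
  rw [h.branchingAbove_eq, Set.ncard_insert_of_notMem (fun hz => hz.2.1 rfl)
    (branchingAbove_finite t z)]

def IsSecondBranchingAbove (t : RTree ABC rankABC) (x y : List ℕ) : Prop :=
  ∃ z, IsNearestBranchingAbove t x z ∧ IsNearestBranchingAbove t z y

theorem IsSecondBranchingAbove.unique {t : RTree ABC rankABC} {x y y' : List ℕ}
    (h : IsSecondBranchingAbove t x y) (h' : IsSecondBranchingAbove t x y') : y = y' := by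
  obtain ⟨z, hxz, hzy⟩ := h
  obtain ⟨z', hxz', hzy'⟩ := h'
  cases hxz.unique hxz'
  exact hzy.unique hzy'

theorem even_ncard_branchingAbove_iff (t : RTree ABC rankABC) (p : List ℕ) :
    Even (branchingAbove t p).ncard ↔
      ∃ r, Relation.ReflTransGen (IsSecondBranchingAbove t) p r ∧ branchingAbove t r = ∅ := by
  constructor
  · rintro ⟨k, hk⟩
    induction k generalizing p with
    | zero => exact ⟨p, .refl, (Set.ncard_eq_zero (branchingAbove_finite t p)).1 hk⟩
    | succ k ih =>
      have hnear : ∀ x, (branchingAbove t x).ncard ≠ 0 → ∃ z, IsNearestBranchingAbove t x z :=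
        fun x hx => exists_isNearestBranchingAbove (Set.nonempty_of_ncard_ne_zero hx)
      obtain ⟨z, hz⟩ := hnear p (by omega)
      obtain ⟨y, hy⟩ := hnear z (by rw [hz.ncard_eq] at hk; omega)
      obtain ⟨r, hr, hre⟩ := ih y (by rw [hz.ncard_eq, hy.ncard_eq] at hk; omega)
      exact ⟨r, .head ⟨z, hz, hy⟩ hr, hre⟩
  · rintro ⟨r, hchain, hre⟩
    induction hchain using Relation.ReflTransGen.head_induction_on with
    | refl => simp [hre]
    | head hstep _ ih =>
      obtain ⟨z, hz, hy⟩ := hstep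
      rw [hz.ncard_eq, hy.ncard_eq]
      simpa [Nat.even_add_one] using ih

theorem IsSecondBranchingAbove.isPos {t : RTree ABC rankABC} {x y : List ℕ}
    (h : IsSecondBranchingAbove t x y) : IsPos t y := by
  obtain ⟨_, -, ⟨_, -, hbr⟩, -⟩ := h
  exact hbr.isPos

end Chains

section Formula

open RTree

abbrev Fml := TForm ABC rankABC 1

/- Variables are fixed numbers: `0`–`3` are the free variables of `tlangFml` and of its
closure, while `4`, `5`, `6` and `10`–`12` are bound inside the auxiliary formulas, which is
why their `sat_` lemmas require the free variables to avoid them. -/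

def hasAFml (u : ℕ) : Fml := .ex 12 (.and (.le u 12) (.lab ABC.a 12))

def branchingFml (y : ℕ) : Fml :=
  .ex 10 (.ex 11 (.and (.and (.edg 1 y 10) (.edg 2 y 11)) (.and (hasAFml 10) (hasAFml 11))))

def properAncFml (z x : ℕ) : Fml := .and (.le z x) (.not (.eq z x))

def nearestBranchingFml (x z : ℕ) : Fml :=
  .and (.and (properAncFml z x) (branchingFml z))
    (.not (.ex 5 (.and (.and (properAncFml z 5) (properAncFml 5 x)) (branchingFml 5))))

def secondBranchingFml : Fml := .ex 4 (.and (nearestBranchingFml 2 4) (nearestBranchingFml 4 3))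

def noBranchingAboveFml (y : ℕ) : Fml := .not (.ex 6 (.and (properAncFml 6 y) (branchingFml 6)))

def tlangFml : Fml :=
  .all 0 (.or (.not (.lab ABC.a 0))
    (.ex 1 (.and (.tc ![2] ![3] secondBranchingFml ![0] ![1]) (noBranchingAboveFml 1))))

variable {t : RTree ABC rankABC}

theorem sat_hasAFml {ν : ℕ → Pos t} {u : ℕ} (hu : u ≠ 12) :
    Sat t (hasAFml u) ν ↔ ∃ s, t.subtree (ν u).1 = some s ∧ hasA s := by
  obtain ⟨s, hs⟩ := Option.isSome_iff_exists.mp (ν u).2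
  simp only [hasAFml, Sat, Function.update_self, Function.update_of_ne hu, hs, Option.some.injEq,
    exists_eq_left', hasA_iff_exists_labelAt]
  constructor
  · rintro ⟨w, ⟨r, hr⟩, hl⟩
    rw [← hr, labelAt, subtree_append, hs, Option.bind_some] at hl
    exact ⟨r, hl⟩
  · rintro ⟨r, hr⟩
    have hpos : IsPos t ((ν u).1 ++ r) := by
      rw [IsPos, subtree_append, hs, Option.bind_some]
      exact IsPos.of_labelAt_eq_some hr
    refine ⟨⟨_, hpos⟩, ⟨r, rfl⟩, ?_⟩
    rw [labelAt, subtree_append, hs, Option.bind_some]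
    exact hr

theorem sat_branchingFml {ν : ℕ → Pos t} {y : ℕ} (h10 : y ≠ 10) (h11 : y ≠ 11) :
    Sat t (branchingFml y) ν ↔ Branching t (ν y).1 := by
  simp only [branchingFml, Sat, sat_hasAFml (show (10 : ℕ) ≠ 12 by decide),
    sat_hasAFml (show (11 : ℕ) ≠ 12 by decide), Function.update_self,
    Function.update_of_ne h10, Function.update_of_ne h11,
    Function.update_of_ne (show (10 : ℕ) ≠ 11 by decide)]
  constructor
  · rintro ⟨u, v, ⟨⟨-, hu⟩, -, hv⟩, hA, hA'⟩
    rw [hu] at hA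
    rw [hv] at hA'
    exact ⟨hA, hA'⟩
  · rintro ⟨⟨s0, hs0, hA0⟩, ⟨s1, hs1, hA1⟩⟩
    exact ⟨⟨_, by rw [IsPos, hs0]; rfl⟩, ⟨_, by rw [IsPos, hs1]; rfl⟩,
      ⟨⟨le_refl 1, rfl⟩, le_of_lt one_lt_two, rfl⟩, ⟨s0, hs0, hA0⟩, ⟨s1, hs1, hA1⟩⟩

theorem sat_properAncFml {ν : ℕ → Pos t} {z x : ℕ} :
    Sat t (properAncFml z x) ν ↔ (ν z).1 <+: (ν x).1 ∧ (ν z).1 ≠ (ν x).1 :=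
  and_congr_right' (not_congr Subtype.ext_iff)

theorem sat_nearestBranchingFml {ν : ℕ → Pos t} {x z : ℕ} (hx5 : x ≠ 5) (hz5 : z ≠ 5)
    (hz10 : z ≠ 10) (hz11 : z ≠ 11) :
    Sat t (nearestBranchingFml x z) ν ↔ IsNearestBranchingAbove t (ν x).1 (ν z).1 := by
  simp only [nearestBranchingFml, Sat, sat_properAncFml, sat_branchingFml hz10 hz11,
    sat_branchingFml (show (5 : ℕ) ≠ 10 by decide) (show (5 : ℕ) ≠ 11 by decide),
    Function.update_self, Function.update_of_ne hx5, Function.update_of_ne hz5]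
  constructor
  · rintro ⟨⟨⟨hzx, hzne⟩, hbr⟩, hno⟩
    refine ⟨⟨hzx, hzne, hbr⟩, fun w ⟨hwx, hwne, hwbr⟩ hzw => ?_⟩
    by_contra hwz
    exact hno ⟨⟨w, hwbr.isPos⟩, ⟨⟨hzw, Ne.symm hwz⟩, hwx, hwne⟩, hwbr⟩
  · rintro ⟨⟨hzx, hzne, hbr⟩, hmax⟩
    exact ⟨⟨⟨hzx, hzne⟩, hbr⟩, fun ⟨w, ⟨⟨hzw, hwz⟩, hwx, hwne⟩, hwbr⟩ =>
      hwz (hmax w.1 ⟨hwx, hwne, hwbr⟩ hzw).symm⟩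

theorem sat_secondBranchingFml {ν : ℕ → Pos t} :
    Sat t secondBranchingFml ν ↔ IsSecondBranchingAbove t (ν 2).1 (ν 3).1 := by
  simp only [secondBranchingFml, Sat,
    sat_nearestBranchingFml (x := 2) (z := 4) (by decide) (by decide) (by decide) (by decide),
    sat_nearestBranchingFml (x := 4) (z := 3) (by decide) (by decide) (by decide) (by decide),
    Function.update_self, Function.update_of_ne (show (2 : ℕ) ≠ 4 by decide),
    Function.update_of_ne (show (3 : ℕ) ≠ 4 by decide)]
  exact ⟨fun ⟨z, h⟩ => ⟨z.1, h⟩, fun ⟨z, hxz, hzy⟩ => ⟨⟨z, hxz.1.2.2.isPos⟩, hxz, hzy⟩⟩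

theorem sat_noBranchingAboveFml {ν : ℕ → Pos t} {y : ℕ} (hy : y ≠ 6) :
    Sat t (noBranchingAboveFml y) ν ↔ branchingAbove t (ν y).1 = ∅ := by
  simp only [noBranchingAboveFml, Sat, sat_properAncFml,
    sat_branchingFml (show (6 : ℕ) ≠ 10 by decide) (show (6 : ℕ) ≠ 11 by decide),
    Function.update_self, Function.update_of_ne hy, Set.eq_empty_iff_forall_notMem]
  exact ⟨fun h q ⟨hq, hne, hbr⟩ => h ⟨⟨q, hbr.isPos⟩, ⟨hq, hne⟩, hbr⟩,
    fun h ⟨w, ⟨hw, hne⟩, hbr⟩ => h w.1 ⟨hw, hne, hbr⟩⟩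

end Formula

section Definability

open Relation

variable {t : RTree ABC rankABC}

theorem sat_secondBranchingFml_updVec (ν : ℕ → Pos t) (a b : Fin 1 → Pos t) :
    Sat t secondBranchingFml (updVec (updVec ν ![2] a) ![3] b) ↔
      IsSecondBranchingAbove t (a 0).1 (b 0).1 := by
  rw [sat_secondBranchingFml, updVec_singleton_self, updVec_singleton_of_ne _ (by decide),
    updVec_singleton_self]

theorem sat_tc_secondBranchingFml {ν : ℕ → Pos t} :
    Sat t (.tc ![2] ![3] secondBranchingFml ![0] ![1]) ν ↔
      ReflTransGen (IsSecondBranchingAbove t) (ν 0).1 (ν 1).1 :=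
  (reflTransGen_fun_unique_iff (S := fun u v : Pos t => IsSecondBranchingAbove t u.1 v.1)
    (sat_secondBranchingFml_updVec ν)).trans
    (reflTransGen_subtype_iff fun _ _ h => h.isPos)

theorem functionalIn_secondBranchingFml : FunctionalIn secondBranchingFml ![2] ![3] := by
  intro t ν a b b' h h'
  rw [sat_secondBranchingFml_updVec] at h h'
  funext i
  rw [Subsingleton.elim i 0]
  exact Subtype.ext (h.unique h')

theorem mem_Tlang_iff_reflTransGen :
    t ∈ Tlang ↔ ∀ p, labelAt t p = some ABC.a →
      ∃ r, ReflTransGen (IsSecondBranchingAbove t) p r ∧ branchingAbove t r = ∅ := by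
  refine forall₂_congr fun p hp => ?_
  rw [card_branching_prefixes_of_labelAt_eq_a hp, even_ncard_branchingAbove_iff]

theorem treesOf_tlangFml : treesOf tlangFml = Tlang := by
  ext t
  simp only [treesOf, tlangFml, Sat, Set.mem_ofPred_eq, ↓sat_tc_secondBranchingFml,
    sat_noBranchingAboveFml (show (1 : ℕ) ≠ 6 by decide), Function.update_self,
    mem_Tlang_iff_reflTransGen]
  constructor
  · intro h p hp
    obtain ⟨r, hr⟩ := (h ⟨p, IsPos.of_labelAt_eq_some hp⟩).resolve_left (not_not.2 hp)
    exact ⟨r.1, hr⟩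
  · intro h u
    refine or_iff_not_imp_left.2 fun hu => ?_
    obtain ⟨r, hchain, hr⟩ := h u.1 (not_not.1 hu)
    have hpos : IsPos t r := by
      rcases hchain.cases_tail with rfl | ⟨_, _, hstep⟩
      exacts [u.2, hstep.isPos]
    exact ⟨⟨r, hpos⟩, hchain, hr⟩

theorem freeVars_secondBranchingFml : freeVars secondBranchingFml = {2, 3} := by
  ext n
  simp [secondBranchingFml, nearestBranchingFml, properAncFml, branchingFml, hasAFml, freeVars]
  omega

theorem freeVars_tlangFml : freeVars tlangFml = ∅ := by
  ext n
  simp [tlangFml, freeVars_secondBranchingFml, noBranchingAboveFml, properAncFml, branchingFml,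
    hasAFml, freeVars]
  omega

theorem wf_tlangFml : WF tlangFml := by
  have : WF secondBranchingFml := by
    simp [secondBranchingFml, nearestBranchingFml, properAncFml, branchingFml, hasAFml, WF]
  simp [tlangFml, WF, Distinct2, freeVars_secondBranchingFml, Function.Injective,
    Fin.forall_fin_one, this, noBranchingAboveFml, properAncFml, branchingFml, hasAFml,
    Set.insert_subset_iff]

theorem detTC_tlangFml : DetTC tlangFml := by
  have : DetTC secondBranchingFml := by
    simp [secondBranchingFml, nearestBranchingFml, properAncFml, branchingFml, hasAFml, DetTC]
  simp [tlangFml, DetTC, functionalIn_secondBranchingFml, this, noBranchingAboveFml,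
    properAncFml, branchingFml, hasAFml]

theorem Tlang_mem_FODTC : Tlang ∈ FODTC ABC rankABC 1 :=
  ⟨tlangFml, wf_tlangFml, detTC_tlangFml, freeVars_tlangFml, treesOf_tlangFml.symm⟩

end Definability

section Parity

open RTree Classical

noncomputable def branchingCount (t : RTree ABC rankABC) (p : List ℕ) : ℕ :=
  p.inits.countP fun q => decide (Branching t q)

theorem card_branching_prefixes (t : RTree ABC rankABC) (p : List ℕ) :
    Nat.card {q : List ℕ // q <+: p ∧ Branching t q} = branchingCount t p := by
  have hset : {q : List ℕ | q <+: p ∧ Branching t q} =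
      ↑(p.inits.filter fun q => decide (Branching t q)).toFinset := by
    ext q
    simp [List.mem_inits]
  rw [← Set.coe_ofPred, Nat.card_coe_set_eq, hset, Set.ncard_coe_finset,
    List.toFinset_card_of_nodup ((nodup_inits p).filter _), branchingCount,
    List.countP_eq_length_filter]

theorem branchingCount_nil (t : RTree ABC rankABC) :
    branchingCount t [] = if Branching t [] then 1 else 0 := by
  simp [branchingCount]

theorem branchingCount_node_cons {x : ABC} (ch : Fin (rankABC x) → RTree ABC rankABC)
    (i : Fin (rankABC x)) (q : List ℕ) :
    branchingCount (node x ch) (i :: q) =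
      branchingCount (ch i) q + if Branching (node x ch) [] then 1 else 0 := by
  simp [branchingCount, List.countP_cons, List.countP_map, Function.comp_def,
    branching_node_cons]

/-- The parameter `b` is the parity of the number of branching ancestors of `s` in an
ambient tree. -/
def ALeavesEven (b : Bool) (s : RTree ABC rankABC) : Prop :=
  ∀ p, labelAt s p = some ABC.a → Even (branchingCount s p + b.toNat)

theorem mem_Tlang_iff (t : RTree ABC rankABC) : t ∈ Tlang ↔ ALeavesEven false t := by
  simp only [Tlang, ALeavesEven, Set.mem_ofPred_eq, card_branching_prefixes, Bool.toNat_false,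
    add_zero]

theorem even_add_ite_add_toNat (n : ℕ) (b : Bool) (c : Prop) [Decidable c] :
    Even (n + (if c then 1 else 0) + b.toNat) ↔ Even (n + (xor b (decide c)).toNat) := by
  by_cases c <;> cases b <;> simp [*, Nat.even_add_one, add_assoc]

theorem aLeavesEven_node_iff {x : ABC} (ch : Fin (rankABC x) → RTree ABC rankABC) (b : Bool) :
    ALeavesEven b (node x ch) ↔
      (x = ABC.a → b = false) ∧
        ∀ i, ALeavesEven (xor b (decide (Branching (node x ch) []))) (ch i) := by
  constructor
  · intro h
    refine ⟨fun hx => ?_, fun i q hq => ?_⟩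
    · subst hx
      have := h [] rfl
      rw [branchingCount_nil, if_neg (not_branching_leaf rfl ch)] at this
      cases b
      · rfl
      · simp at this
    · have := h (i :: q) (by rw [labelAt_node_cons, dif_pos i.2]; exact hq)
      rwa [branchingCount_node_cons, even_add_ite_add_toNat] at this
  · rintro ⟨ha, hch⟩ (_ | ⟨i, q⟩) hp
    · have hx : x = ABC.a := Option.some.inj hp
      subst hx
      rw [branchingCount_nil, if_neg (not_branching_leaf rfl ch), ha rfl]
      simp
    · rw [labelAt_node_cons] at hp
      split at hp
      · rw [branchingCount_node_cons (i := ⟨i, ‹_›⟩), even_add_ite_add_toNat]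
        exact hch _ q hp
      · exact absurd hp nofun

end Parity

section DecisionTable

inductive Move (Sig : Type) (k : ℕ) (X Q : Type) : Type
  | halt
  | exec (χ : TInstr Sig k X) (q : Q)
  | branch (τ : TTest Sig k X) (q₁ q₀ : Q)

variable {Sig : Type} {rank : Sig → ℕ} {k : ℕ} {X Q : Type}

def Move.instrs (p : Q) : Move Sig k X Q → Set (Q × TInstr Sig k X × Q)
  | .halt => ∅
  | .exec χ q => {(p, χ, q)}
  | .branch τ q₁ q₀ => {(p, .test true τ, q₁), (p, .test false τ, q₀)}

theorem Move.instrs_finite (p : Q) (m : Move Sig k X Q) : (m.instrs p).Finite := by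
  cases m <;> simp [Move.instrs, Set.toFinite]

theorem Move.fst_eq_of_mem_instrs {p : Q} {m : Move Sig k X Q} {e : Q × TInstr Sig k X × Q}
    (h : e ∈ m.instrs p) : e.1 = p := by
  cases m <;> simp only [Move.instrs, Set.mem_insert_iff, Set.mem_singleton_iff] at h <;>
    aesop

theorem Move.negOf_of_mem_instrs {p q₁ q₂ : Q} {χ₁ χ₂ : TInstr Sig k X} (m : Move Sig k X Q)
    (h₁ : (p, χ₁, q₁) ∈ m.instrs p) (h₂ : (p, χ₂, q₂) ∈ m.instrs p) (hne : (χ₁, q₁) ≠ (χ₂, q₂)) :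
    negOf χ₁ χ₂ ∨ negOf χ₂ χ₁ := by
  cases m <;> simp only [Move.instrs, Set.mem_insert_iff, Set.mem_singleton_iff, Prod.mk.injEq,
    true_and, Set.mem_empty_iff_false] at h₁ h₂
  · exact absurd (by rw [h₁.1, h₁.2, h₂.1, h₂.2]) hne
  · rcases h₁ with ⟨rfl, rfl⟩ | ⟨rfl, rfl⟩ <;> rcases h₂ with ⟨rfl, rfl⟩ | ⟨rfl, rfl⟩
    · exact absurd rfl hne
    · exact Or.inl ⟨true, _, rfl, rfl⟩
    · exact Or.inr ⟨true, _, rfl, rfl⟩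
    · exact absurd rfl hne

def TWA.ofMoves [Fintype Q] [Fintype X] (δ : Q → Move Sig k X Q) (q₀ : Q) (acc : Set Q) :
    TWA Sig rank k where
  Q := Q
  finQ := ‹_›
  X := X
  finX := ‹_›
  q0 := q₀
  acc := acc
  instr := ⋃ p, (δ p).instrs p
  instrFin := Set.finite_iUnion fun p => (δ p).instrs_finite p

variable [Fintype Q] [Fintype X] {δ : Q → Move Sig k X Q} {q₀ : Q} {acc : Set Q}

theorem TWA.mem_instr_ofMoves {p q : Q} {χ : TInstr Sig k X} :
    (p, χ, q) ∈ (TWA.ofMoves (rank := rank) δ q₀ acc).instr ↔ (p, χ, q) ∈ (δ p).instrs p := by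
  refine ⟨fun h => ?_, fun h => Set.mem_iUnion.2 ⟨p, h⟩⟩
  obtain ⟨p', hp'⟩ := Set.mem_iUnion.1 h
  cases Move.fst_eq_of_mem_instrs hp'
  exact hp'

theorem TWA.deterministic_ofMoves : Deterministic (TWA.ofMoves (rank := rank) δ q₀ acc) :=
  fun p _ _ _ _ h₁ h₂ => (δ p).negOf_of_mem_instrs (TWA.mem_instr_ofMoves.1 h₁)
    (TWA.mem_instr_ofMoves.1 h₂)

end DecisionTable

section Runs

open Relation

variable {Sig : Type} {rank : Sig → ℕ} {k : ℕ} {t : RTree Sig rank}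

theorem instrStep_unique {X : Type} {ins : TInstr Sig k X} {hs hs₁ hs₂ : Fin k → Pos t}
    {π π₁ π₂ : List (X × Pos t)} (h₁ : instrStep t ins hs π hs₁ π₁)
    (h₂ : instrStep t ins hs π hs₂ π₂) : hs₁ = hs₂ ∧ π₁ = π₂ := by
  cases ins with
  | up i =>
    obtain ⟨rfl, ⟨j₁, hj₁⟩, ho₁⟩ := h₁
    obtain ⟨rfl, ⟨j₂, hj₂⟩, ho₂⟩ := h₂
    refine ⟨funext fun h => ?_, rfl⟩
    by_cases hi : h = i
    · subst hi
      have hlen := congrArg List.length (hj₁.symm.trans hj₂)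
      simp only [List.length_append, List.length_singleton, add_left_inj] at hlen
      exact Subtype.ext (List.append_inj (hj₁.symm.trans hj₂) hlen).1
    · rw [ho₁ h hi, ho₂ h hi]
  | down i j =>
    obtain ⟨rfl, -, hj₁, ho₁⟩ := h₁
    obtain ⟨rfl, -, hj₂, ho₂⟩ := h₂
    refine ⟨funext fun h => ?_, rfl⟩
    by_cases hi : h = i
    · subst hi
      exact Subtype.ext (hj₁.trans hj₂.symm)
    · rw [ho₁ h hi, ho₂ h hi]
  | dropPeb i x =>
    obtain ⟨rfl, rfl, -⟩ := h₁
    obtain ⟨rfl, rfl, -⟩ := h₂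
    exact ⟨rfl, rfl⟩
  | retrieve x =>
    obtain ⟨rfl, w₁, rfl⟩ := h₁
    obtain ⟨rfl, w₂, h⟩ := h₂
    exact ⟨rfl, (List.cons_eq_cons.1 h).2⟩
  | test b τ =>
    obtain ⟨rfl, rfl, -⟩ := h₁
    obtain ⟨rfl, rfl, -⟩ := h₂
    exact ⟨rfl, rfl⟩

theorem Deterministic.step_rightUnique {A : TWA Sig rank k} (hA : Deterministic A) :
    Relator.RightUnique (Step A t) := by
  rintro ⟨q, hs, π⟩ ⟨q₁, hs₁, π₁⟩ ⟨q₂, hs₂, π₂⟩ ⟨χ₁, hm₁, h₁⟩ ⟨χ₂, hm₂, h₂⟩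
  by_cases heq : (χ₁, q₁) = (χ₂, q₂)
  · obtain ⟨rfl, rfl⟩ := Prod.mk.inj heq
    obtain ⟨rfl, rfl⟩ := instrStep_unique h₁ h₂
    rfl
  · rcases hA _ _ _ _ _ hm₁ hm₂ heq with ⟨b, τ, rfl, rfl⟩ | ⟨b, τ, rfl, rfl⟩ <;>
      cases b <;> simp_all [instrStep]

theorem Deterministic.accepts_iff {A : TWA Sig rank k} (hA : Deterministic A) {c : TConf A t}
    (hrun : ReflTransGen (Step A t) (initConf A t) c) (hc : HaltingConf A t c) :
    Accepts A t ↔ c.1 ∈ A.acc ∧ c.2 = (fun _ => rootPos t, []) := by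
  constructor
  · rintro ⟨q, hq, hrun', hhalt⟩
    cases eq_of_reflTransGen_of_normal hA.step_rightUnique hrun hrun' hc hhalt
    exact ⟨hq, rfl⟩
  · obtain ⟨q, hs⟩ := c
    rintro ⟨hq, rfl⟩
    exact ⟨q, hq, hrun, hc⟩

end Runs

section SingleHead

open RTree

variable {Sig : Type} {rank : Sig → ℕ} {X : Type} {t : RTree Sig rank} {p p' : Pos t}
  {π π' : List (X × Pos t)}

theorem testHolds_lab_iff {x y : Sig} {ch : Fin (rank y) → RTree Sig rank}
    (hs : t.subtree p.1 = some (node y ch)) :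
    testHolds t (.lab (0 : Fin 1) x) (fun _ => p) π ↔ y = x := by
  simp [testHolds, labelAt_eq_of_subtree_eq hs]

theorem testHolds_peb_iff {v : Pos t} :
    testHolds t (.peb (0 : Fin 1) ()) (fun _ => p) [((), v)] ↔ p = v := by
  simp [testHolds]

theorem testHolds_chno_child_iff {a : Sig} {ch : Fin (rank a) → RTree Sig rank}
    (hp : t.subtree p.1 = some (node a ch)) (i : Fin (rank a)) {j : ℕ} :
    testHolds t (.chno (0 : Fin 1) j) (fun _ => p.child hp i) π ↔ j = i + 1 := by
  simp [testHolds, Pos.child, childNo_append_singleton, eq_comm]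

variable {Q : Type} [Fintype Q] [Fintype X] {δ : Q → Move Sig 1 X Q} {q₀ : Q} {acc : Set Q}
  {q q' q₁ q₂ : Q}

theorem haltingConf_ofMoves {hs : Fin 1 → Pos t} (hδ : δ q = .halt) :
    HaltingConf (TWA.ofMoves δ q₀ acc) t (q, hs, π) := by
  rintro c ⟨χ, hm, -⟩
  have := TWA.mem_instr_ofMoves.1 hm
  rw [hδ] at this
  exact this

theorem step_exec {χ : TInstr Sig 1 X} (hδ : δ q = .exec χ q')
    (h : instrStep t χ (fun _ => p) π (fun _ => p') π') :
    Step (TWA.ofMoves δ q₀ acc) t (q, fun _ => p, π) (q', fun _ => p', π') :=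
  ⟨χ, TWA.mem_instr_ofMoves.2 (by rw [hδ]; rfl), h⟩

theorem step_test_pos {τ : TTest Sig 1 X} (hδ : δ q = .branch τ q₁ q₂)
    (h : testHolds t τ (fun _ => p) π) :
    Step (TWA.ofMoves δ q₀ acc) t (q, fun _ => p, π) (q₁, fun _ => p, π) :=
  ⟨.test true τ, TWA.mem_instr_ofMoves.2 (by rw [hδ]; exact Or.inl rfl), rfl, rfl,
    iff_of_true h rfl⟩

theorem step_test_neg {τ : TTest Sig 1 X} (hδ : δ q = .branch τ q₁ q₂)
    (h : ¬ testHolds t τ (fun _ => p) π) :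
    Step (TWA.ofMoves δ q₀ acc) t (q, fun _ => p, π) (q₂, fun _ => p, π) :=
  ⟨.test false τ, TWA.mem_instr_ofMoves.2 (by rw [hδ]; exact Or.inr rfl), rfl, rfl,
    iff_of_false h Bool.false_ne_true⟩

theorem step_up {j : ℕ} (hδ : δ q = .exec (.up 0) q') (h : p.1 = p'.1 ++ [j]) :
    Step (TWA.ofMoves δ q₀ acc) t (q, fun _ => p, π) (q', fun _ => p', π) :=
  step_exec hδ ⟨rfl, ⟨j, h⟩, fun i hi => absurd (Subsingleton.elim i 0) hi⟩

theorem step_down {j : ℕ} (hδ : δ q = .exec (.down 0 (j + 1)) q') (h : p'.1 = p.1 ++ [j]) :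
    Step (TWA.ofMoves δ q₀ acc) t (q, fun _ => p, π) (q', fun _ => p', π) :=
  step_exec hδ ⟨rfl, Nat.le_add_left 1 j, h, fun i hi => absurd (Subsingleton.elim i 0) hi⟩

theorem step_drop {x : X} (hδ : δ q = .exec (.dropPeb 0 x) q') :
    Step (TWA.ofMoves δ q₀ acc) t (q, fun _ => p, []) (q', fun _ => p, [(x, p)]) :=
  step_exec hδ ⟨rfl, rfl, fun _ => List.not_mem_nil⟩

theorem step_retrieve {x : X} (hδ : δ q = .exec (.retrieve x) q') :
    Step (TWA.ofMoves δ q₀ acc) t (q, fun _ => p, [(x, p')]) (q', fun _ => p, []) :=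
  step_exec hδ ⟨rfl, p', rfl⟩

end SingleHead

section Automaton

inductive Side : Type
  | left | right
deriving DecidableEq

instance : Fintype Side :=
  ⟨{.left, .right}, fun x => by cases x <;> decide⟩

/-- Where the main traversal resumes after a branching test. -/
inductive Caller : Type
  | enter (b : Bool) | leave (b : Bool)
deriving Fintype

/-- `b` is the parity of the number of branching ancestors of the head: proper ones in `enter`
and `exit`, the head included in `leave` and `descend`; `f` records whether the current search
has met an `a`. -/
inductive State : Type
  | enter (b : Bool) | enterNotA (b : Bool) | descend (b : Bool)
  | leave (b : Bool) | leaveNonRoot (b : Bool)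
  | exit (b : Bool) | exitLeft (b : Bool) | toSibling (b : Bool) | exitRight (b : Bool)
  | accept | reject
  | testBranching (c : Caller) | testLeft (c : Caller)
  | seek (s : Side) (c : Caller) (f : Bool) | seekNotA (s : Side) (c : Caller) (f : Bool)
  | seekDown (s : Side) (c : Caller) (f : Bool) | seekRight (s : Side) (c : Caller) (f : Bool)
  | retreat (s : Side) (c : Caller) (f : Bool)
  | ascend (fromLeft : Bool) (s : Side) (c : Caller) (f : Bool)
  | returned (fromLeft : Bool) (s : Side) (c : Caller) (f : Bool)
  | sideDone (s : Side) (c : Caller) (f : Bool)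
deriving Fintype

def Caller.resume : Caller → Bool → State
  | .enter b, br => .descend (xor b br)
  | .leave b, br => .exit (xor b br)

def delta : State → Move ABC 1 Unit State
  | .enter b => .branch (.lab 0 .a) (if b then .reject else .leave false) (.enterNotA b)
  | .enterNotA b => .branch (.lab 0 .b) (.leave b) (.testBranching (.enter b))
  | .descend b => .exec (.down 0 1) (.enter b)
  | .leave b => .branch (.chno 0 0) .accept (.leaveNonRoot b)
  | .leaveNonRoot b => .branch (.lab 0 .c) (.testBranching (.leave b)) (.exit b)
  | .exit b => .branch (.chno 0 1) (.exitLeft b) (.exitRight b)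
  | .exitLeft b => .exec (.up 0) (.toSibling b)
  | .toSibling b => .exec (.down 0 2) (.enter b)
  | .exitRight b => .exec (.up 0) (.leave b)
  | .accept => .halt
  | .reject => .halt
  | .testBranching c => .exec (.dropPeb 0 ()) (.testLeft c)
  | .testLeft c => .exec (.down 0 1) (.seek .left c false)
  | .seek s c f => .branch (.lab 0 .a) (.retreat s c true) (.seekNotA s c f)
  | .seekNotA s c f => .branch (.lab 0 .b) (.retreat s c f) (.seekDown s c f)
  | .seekDown s c f => .exec (.down 0 1) (.seek s c f)
  | .seekRight s c f => .exec (.down 0 2) (.seek s c f)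
  | .retreat s c f => .branch (.chno 0 1) (.ascend true s c f) (.ascend false s c f)
  | .ascend l s c f => .exec (.up 0) (.returned l s c f)
  | .returned l s c f =>
      .branch (.peb 0 ()) (.sideDone s c f) (if l then .seekRight s c f else .retreat s c f)
  | .sideDone .left c false => .exec (.retrieve ()) (c.resume false)
  | .sideDone .left c true => .exec (.down 0 2) (.seek .right c false)
  | .sideDone .right c f => .exec (.retrieve ()) (c.resume f)

def tlangTWA : TWA ABC rankABC 1 := TWA.ofMoves delta (.enter false) {.accept}

variable {t : RTree ABC rankABC}

def conf (q : State) (p : Pos t) (π : List (Unit × Pos t)) : TConf tlangTWA t :=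
  (q, fun _ => p, π)

end Automaton

section Correctness

open RTree Relation Classical

variable {t : RTree ABC rankABC}

local notation "Reaches" => ReflTransGen (Step tlangTWA _)

theorem run_retreat {q : Pos t} {ch : Fin (rankABC ABC.c) → RTree ABC rankABC}
    (hq : t.subtree q.1 = some (node ABC.c ch)) (i : Fin (rankABC ABC.c)) (v : Pos t)
    (side : Side) (c : Caller) (f : Bool) :
    Reaches (conf (.retreat side c f) (q.child hq i) [((), v)])
      (conf (.returned (decide (i = leftIdx)) side c f) q [((), v)]) := by
  by_cases hi : i = leftIdx
  · rw [decide_eq_true hi]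
    exact .head (step_test_pos rfl ((testHolds_chno_child_iff hq _).2 (by simp [hi, leftIdx])))
      (.single (step_up rfl rfl))
  · rw [decide_eq_false hi]
    refine .head (step_test_neg rfl ?_) (.single (step_up rfl rfl))
    rw [testHolds_chno_child_iff]
    exact fun h => hi (Fin.ext (by simp [leftIdx]; omega))

theorem run_seek (s : RTree ABC rankABC) {q : Pos t} {ch : Fin (rankABC ABC.c) → RTree ABC rankABC}
    (hq : t.subtree q.1 = some (node ABC.c ch)) (i : Fin (rankABC ABC.c))
    (hs : t.subtree (q.child hq i).1 = some s) {v : Pos t} (hv : v.1 <+: q.1)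
    (side : Side) (c : Caller) (f : Bool) :
    Reaches (conf (.seek side c f) (q.child hq i) [((), v)])
      (conf (.returned (decide (i = leftIdx)) side c (f || decide (hasA s))) q [((), v)]) := by
  induction s generalizing q ch i f with
  | node x ch' ih =>
    cases x with
    | a =>
      rw [show (f || decide (hasA (node ABC.a ch'))) = true by simp [hasA]]
      exact .head (step_test_pos rfl ((testHolds_lab_iff hs).2 rfl)) (run_retreat hq i v side c _)
    | b =>
      rw [show (f || decide (hasA (node ABC.b ch'))) = f by simp [hasA, rankABC]]
      exact .head (step_test_neg rfl (by rw [testHolds_lab_iff hs]; decide))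
        (.head (step_test_pos rfl ((testHolds_lab_iff hs).2 rfl)) (run_retreat hq i v side c _))
    | c =>
      set p := q.child hq i
      have hvp : v.1 <+: p.1 := hv.trans ⟨_, rfl⟩
      have hpv : p ≠ v := Pos.child_ne_of_prefix hq i hv
      have hl := ih leftIdx (hq := hs) (i := leftIdx) (hs := p.subtree_child hs leftIdx) (hv := hvp)
        (f := f)
      have hr := ih rightIdx (hq := hs) (i := rightIdx) (hs := p.subtree_child hs rightIdx)
        (hv := hvp) (f := f || decide (hasA (ch' leftIdx)))
      rw [show decide (leftIdx = leftIdx) = true by decide] at hl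
      rw [show decide (rightIdx = leftIdx) = false by decide] at hr
      rw [show (f || decide (hasA (node ABC.c ch'))) =
        (f || decide (hasA (ch' leftIdx)) || decide (hasA (ch' rightIdx))) by
          simp [hasA_node_c, Bool.or_assoc]]
      refine .head (step_test_neg rfl (by rw [testHolds_lab_iff hs]; decide)) <|
        .head (step_test_neg rfl (by rw [testHolds_lab_iff hs]; decide)) <|
        .head (step_down rfl rfl) <| hl.trans <|
        .head (step_test_neg rfl (mt testHolds_peb_iff.1 hpv)) <|
        .head (step_down rfl rfl) <| hr.trans <|
        .head (step_test_neg rfl (mt testHolds_peb_iff.1 hpv)) (run_retreat hq i v side c _)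

theorem run_testBranching {v : Pos t} {ch : Fin (rankABC ABC.c) → RTree ABC rankABC}
    (hv : t.subtree v.1 = some (node ABC.c ch)) (c : Caller) :
    Reaches (conf (.testBranching c) v [])
      (conf (c.resume (decide (Branching (node ABC.c ch) []))) v []) := by
  have hl := run_seek (ch leftIdx) hv leftIdx (v.subtree_child hv leftIdx) (List.prefix_refl _)
    .left c false
  rw [show decide (leftIdx = leftIdx) = true by decide, Bool.false_or] at hl
  have hleft : Reaches (conf (.testBranching c) v [])
      (conf (.sideDone .left c (decide (hasA (ch leftIdx)))) v [((), v)]) :=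
    .head (step_drop rfl) <| .head (step_down rfl rfl) <|
      hl.trans (.single (step_test_pos rfl (testHolds_peb_iff.2 rfl)))
  by_cases hA : hasA (ch leftIdx)
  · have hr := run_seek (ch rightIdx) hv rightIdx (v.subtree_child hv rightIdx)
      (List.prefix_refl _) .right c false
    rw [show decide (rightIdx = leftIdx) = false by decide, Bool.false_or] at hr
    rw [decide_eq_true hA] at hleft
    rw [show decide (Branching (node ABC.c ch) []) = decide (hasA (ch rightIdx)) by
      simp [branching_node_c_nil, hA]]
    exact hleft.trans <| .head (step_down rfl rfl) <| hr.trans <|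
      .head (step_test_pos rfl (testHolds_peb_iff.2 rfl)) (.single (step_retrieve rfl))
  · rw [decide_eq_false hA] at hleft
    rw [show decide (Branching (node ABC.c ch) []) = false by simp [branching_node_c_nil, hA]]
    exact hleft.trans (.single (step_retrieve rfl))

theorem run_leave (s : RTree ABC rankABC) {q : Pos t}
    {ch : Fin (rankABC ABC.c) → RTree ABC rankABC} (hq : t.subtree q.1 = some (node ABC.c ch))
    (i : Fin (rankABC ABC.c)) (hs : t.subtree (q.child hq i).1 = some s) (b : Bool) :
    Reaches (conf (.leave b) (q.child hq i) [])
      (conf (.exit (xor b (decide (Branching s [])))) (q.child hq i) []) := by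
  refine .head (step_test_neg rfl (by rw [testHolds_chno_child_iff]; omega)) ?_
  obtain ⟨x, ch'⟩ := s
  cases x with
  | c => exact .head (step_test_pos rfl ((testHolds_lab_iff hs).2 rfl)) (run_testBranching hs _)
  | a | b =>
    rw [decide_eq_false (not_branching_leaf rfl ch'), Bool.xor_false]
    exact .single (step_test_neg rfl (by rw [testHolds_lab_iff hs]; decide))

theorem run_exit_left {q : Pos t} {ch : Fin (rankABC ABC.c) → RTree ABC rankABC}
    (hq : t.subtree q.1 = some (node ABC.c ch)) (b : Bool) :
    Reaches (conf (.exit b) (q.child hq leftIdx) []) (conf (.enter b) (q.child hq rightIdx) []) :=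
  .head (step_test_pos rfl ((testHolds_chno_child_iff hq _).2 rfl)) <|
    .head (step_up rfl rfl) (.single (step_down rfl rfl))

theorem run_exit_right {q : Pos t} {ch : Fin (rankABC ABC.c) → RTree ABC rankABC}
    (hq : t.subtree q.1 = some (node ABC.c ch)) (b : Bool) :
    Reaches (conf (.exit b) (q.child hq rightIdx) []) (conf (.leave b) q []) :=
  .head (step_test_neg rfl (by rw [testHolds_chno_child_iff]; decide)) (.single (step_up rfl rfl))

theorem run_enter_node_c_start {p : Pos t} {ch : Fin (rankABC ABC.c) → RTree ABC rankABC}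
    (hs : t.subtree p.1 = some (node ABC.c ch)) (b : Bool) :
    Reaches (conf (.enter b) p [])
      (conf (.enter (xor b (decide (Branching (node ABC.c ch) [])))) (p.child hs leftIdx) []) :=
  .head (step_test_neg rfl (by rw [testHolds_lab_iff hs]; decide)) <|
    .head (step_test_neg rfl (by rw [testHolds_lab_iff hs]; decide)) <|
    (run_testBranching hs (.enter b)).trans (.single (step_down rfl rfl))

theorem run_enter_exit {s : RTree ABC rankABC} {q : Pos t}
    {ch : Fin (rankABC ABC.c) → RTree ABC rankABC} (hq : t.subtree q.1 = some (node ABC.c ch))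
    {i : Fin (rankABC ABC.c)} (hs : t.subtree (q.child hq i).1 = some s) {b : Bool}
    (h : Reaches (conf (.enter b) (q.child hq i) [])
      (conf (.leave (xor b (decide (Branching s [])))) (q.child hq i) [])) :
    Reaches (conf (.enter b) (q.child hq i) []) (conf (.exit b) (q.child hq i) []) := by
  have := h.trans (run_leave s hq i hs _)
  rwa [Bool.xor_assoc, Bool.xor_self, Bool.xor_false] at this

theorem run_enter (s : RTree ABC rankABC) (b : Bool) (p : Pos t)
    (hs : t.subtree p.1 = some s) :
    (ALeavesEven b s →
      Reaches (conf (.enter b) p []) (conf (.leave (xor b (decide (Branching s [])))) p [])) ∧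
    (¬ ALeavesEven b s → ∃ w, Reaches (conf (.enter b) p []) (conf .reject w [])) := by
  induction s generalizing b p with
  | node x ch ih =>
    rw [aLeavesEven_node_iff]
    cases x with
    | a =>
      rw [decide_eq_false (not_branching_leaf rfl ch)]
      cases b
      · exact ⟨fun _ => .single (step_test_pos rfl ((testHolds_lab_iff hs).2 rfl)),
          fun h => absurd ⟨fun _ => rfl, fun i => absurd i.2 (by simp [rankABC])⟩ h⟩
      · exact ⟨fun h => absurd (h.1 rfl) Bool.noConfusion,
          fun _ => ⟨p, .single (step_test_pos rfl ((testHolds_lab_iff hs).2 rfl))⟩⟩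
    | b =>
      rw [decide_eq_false (not_branching_leaf rfl ch), Bool.xor_false]
      exact ⟨fun _ => .head (step_test_neg rfl (by rw [testHolds_lab_iff hs]; decide))
          (.single (step_test_pos rfl ((testHolds_lab_iff hs).2 rfl))),
        fun h => absurd ⟨nofun, fun i => absurd i.2 (by simp [rankABC])⟩ h⟩
    | c =>
      set b' := xor b (decide (Branching (node ABC.c ch) []))
      simp only [reduceCtorEq, false_implies, true_and, forall_fin_rankABC_c]
      have hchild := fun i (h : ALeavesEven b' (ch i)) =>
        run_enter_exit hs (p.subtree_child hs i) ((ih i b' _ (p.subtree_child hs i)).1 h)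
      constructor
      · rintro ⟨hl, hr⟩
        exact (run_enter_node_c_start hs b).trans <| (hchild _ hl).trans <|
          (run_exit_left hs b').trans <| (hchild _ hr).trans (run_exit_right hs b')
      · intro hbad
        by_cases hl : ALeavesEven b' (ch leftIdx)
        · obtain ⟨w, hw⟩ := (ih rightIdx b' _ (p.subtree_child hs rightIdx)).2
            fun hr => hbad ⟨hl, hr⟩
          exact ⟨w, (run_enter_node_c_start hs b).trans <| (hchild _ hl).trans <|
            (run_exit_left hs b').trans hw⟩
        · obtain ⟨w, hw⟩ := (ih leftIdx b' _ (p.subtree_child hs leftIdx)).2 hl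
          exact ⟨w, (run_enter_node_c_start hs b).trans hw⟩

theorem mem_lang_tlangTWA_iff : t ∈ Lang tlangTWA ↔ ALeavesEven false t := by
  have hroot : t.subtree (rootPos t).1 = some t := rfl
  by_cases h : ALeavesEven false t
  · have hrun := ((run_enter t false _ hroot).1 h).trans
      (.single (step_test_pos (p := rootPos t) rfl rfl))
    exact iff_of_true ((TWA.deterministic_ofMoves.accepts_iff hrun
      (haltingConf_ofMoves rfl)).2 ⟨rfl, rfl⟩) h
  · obtain ⟨w, hw⟩ := (run_enter t false _ hroot).2 h
    refine iff_of_false (fun hacc => ?_) h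
    have hrej := ((TWA.deterministic_ofMoves.accepts_iff hw (haltingConf_ofMoves rfl)).1 hacc).1
    exact State.noConfusion hrej

end Correctness

/-- The language `T` is definable in `FO+DTC^1` and is accepted
by a deterministic single-head tree-walking automaton with a single (trivially
nested) pebble. -/
theorem Tlang_FODTC1_and_one_pebble :
    Tlang ∈ FODTC ABC rankABC 1 ∧
    ∃ A : TWA ABC rankABC 1, Deterministic A ∧ @Fintype.card A.X A.finX = 1 ∧
      Tlang = Lang A :=
  ⟨Tlang_mem_FODTC, tlangTWA, TWA.deterministic_ofMoves, rfl,
    Set.ext fun _ => (mem_Tlang_iff _).trans mem_lang_tlangTWA_iff.symm⟩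

end NestedPebbles
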